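/- Monotonicity of safety violation in the thread limit: if the petrified program P_β(prog) violates the safety specification S_safe, then for every β' ≥ β the petrified program P_{β'}(prog) also violates S_safe. -/

import Mathlib

/-! Core semantics of the concurrent language with fork/join. -/

namespace Conc

abbrev Var := String
abbrev Val := ℤ
/-- Integer-valued expressions (shallow embedding, evaluated in a combined state). -/
abbrev AExp := (Var → Val) → Val
/-- Boolean-valued expressions. -/
abbrev BExp := (Var → Val) → Prop

/-- Commands of the language, parameterized by the type `T` of thread template names. -/
inductive Cmd (T : Type) where
  | assign : Var → AExp → Cmd T
  | assume_ : BExp → Cmd T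
  | assert_ : BExp → Cmd T
  | ite : BExp → Cmd T → Cmd T → Cmd T
  | while_ : BExp → Cmd T → Cmd T
  | fork : AExp → T → Cmd T
  | join : AExp → Cmd T
  | seq : Cmd T → Cmd T → Cmd T

/-- A remainder program: a command, successful termination `Ω`, or failure `↯`. -/
inductive Rem (T : Type) where
  | run : Cmd T → Rem T
  | term : Rem T   -- Ω
  | fail : Rem T   -- ↯

/-- Sequential composition `C ; X` of a command with a remainder, with `C ; Ω = C`. -/
def Rem.after {T : Type} (C : Cmd T) : Rem T → Rem T
  | .run C' => .run (C.seq C')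
  | _ => .run C

/-- A local configuration `⟨X, θ, t, s⟩`. -/
structure LConf (T : Type) where
  rem : Rem T
  tmpl : T
  tid : Option Val
  st : Var → Val

/-- A program: bodies of thread templates, the main template, and the global variables. -/
structure Prog (T : Type) where
  body : T → Cmd T
  main : T
  isGlobal : Var → Bool

/-- Combined state `s ∪ g`. -/
def Prog.comb {T : Type} (P : Prog T) (g s : Var → Val) : Var → Val :=
  fun x => if P.isGlobal x then g x else s x

/-- Kinds of simple statements labelling a step. -/
inductive Lab (T : Type) where
  | atomic : Lab T
  | forkL : T → Lab T
  | joinL : Lab T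

/-- Global configurations: a multiset of local configurations and a global state. -/
abbrev GConf (T : Type) := Multiset (LConf T) × (Var → Val)

/-- The small-step semantic transition relation. -/
inductive Step {T : Type} (P : Prog T) : Lab T → GConf T → GConf T → Prop where
  | assume_ {e : BExp} {X θ t s g} (h : e (P.comb g s)) :
      Step P .atomic ({⟨Rem.after (.assume_ e) X, θ, t, s⟩}, g) ({⟨X, θ, t, s⟩}, g)
  | assignGlobal {x e X θ t s g} (hx : P.isGlobal x = true) :
      Step P .atomic ({⟨Rem.after (.assign x e) X, θ, t, s⟩}, g)
        ({⟨X, θ, t, s⟩}, Function.update g x (e (P.comb g s)))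
  | assignLocal {x e X θ t s g} (hx : P.isGlobal x = false) :
      Step P .atomic ({⟨Rem.after (.assign x e) X, θ, t, s⟩}, g)
        ({⟨X, θ, t, Function.update s x (e (P.comb g s))⟩}, g)
  | assert₁ {e : BExp} {X θ t s g} (h : e (P.comb g s)) :
      Step P .atomic ({⟨Rem.after (.assert_ e) X, θ, t, s⟩}, g) ({⟨X, θ, t, s⟩}, g)
  | assert₂ {e : BExp} {X θ t s g} (h : ¬ e (P.comb g s)) :
      Step P .atomic ({⟨Rem.after (.assert_ e) X, θ, t, s⟩}, g) ({⟨.fail, θ, t, s⟩}, g)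
  | ite₁ {e C₁ C₂ X θ t s g} (h : e (P.comb g s)) :
      Step P .atomic ({⟨Rem.after (.ite e C₁ C₂) X, θ, t, s⟩}, g)
        ({⟨Rem.after C₁ X, θ, t, s⟩}, g)
  | ite₂ {e C₁ C₂ X θ t s g} (h : ¬ e (P.comb g s)) :
      Step P .atomic ({⟨Rem.after (.ite e C₁ C₂) X, θ, t, s⟩}, g)
        ({⟨Rem.after C₂ X, θ, t, s⟩}, g)
  | while₁ {e C X θ t s g} (h : e (P.comb g s)) :
      Step P .atomic ({⟨Rem.after (.while_ e C) X, θ, t, s⟩}, g)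
        ({⟨Rem.after C (Rem.after (.while_ e C) X), θ, t, s⟩}, g)
  | while₂ {e C X θ t s g} (h : ¬ e (P.comb g s)) :
      Step P .atomic ({⟨Rem.after (.while_ e C) X, θ, t, s⟩}, g) ({⟨X, θ, t, s⟩}, g)
  | fork {e θ' X θ t s s' g} :
      Step P (.forkL θ') ({⟨Rem.after (.fork e θ') X, θ, t, s⟩}, g)
        ({⟨X, θ, t, s⟩, ⟨.run (P.body θ'), θ', some (e (P.comb g s)), s'⟩}, g)
  | join {e X θ t s θ' s' g} :
      Step P .joinL
        ({⟨Rem.after (.join e) X, θ, t, s⟩, ⟨.term, θ', some (e (P.comb g s)), s'⟩}, g)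
        ({⟨X, θ, t, s⟩}, g)
  | frame {l M₁ M₁' M₂ g g'} :
      Step P l (M₁, g) (M₁', g') → Step P l (M₁ + M₂, g) (M₁' + M₂, g')

/-- Initial global configurations. -/
def IsInit {T : Type} (P : Prog T) (c : GConf T) : Prop :=
  ∃ s, c.1 = {⟨.run (P.body P.main), P.main, none, s⟩}

/-- `cfg 0 → cfg 1 → … → cfg n` is an execution with statement kinds `lab`. -/
def IsExec {T : Type} (P : Prog T) (n : ℕ) (cfg : ℕ → GConf T) (lab : ℕ → Lab T) : Prop :=
  IsInit P (cfg 0) ∧ ∀ i < n, Step P (lab i) (cfg i) (cfg (i + 1))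

/-- The number of local configurations with thread template `θ` in `M`. -/
def tmplCount {T : Type} [DecidableEq T] (M : Multiset (LConf T)) (θ : T) : ℕ :=
  Multiset.card (M.filter (fun c => c.tmpl = θ))

/-- The thread width of the program `P` is at most `β`. -/
def WidthLe {T : Type} [DecidableEq T] (P : Prog T) (β : ℕ) : Prop :=
  ∀ n cfg lab, IsExec P n cfg lab → ∀ i ≤ n, ∀ θ, tmplCount (cfg i).1 θ ≤ β

/-- `P` is correct: no execution reaches the failure marker `↯`. -/
def Correct {T : Type} (P : Prog T) : Prop :=
  ¬ ∃ n cfg lab, IsExec P n cfg lab ∧ ∃ i ≤ n, ∃ c ∈ (cfg i).1, c.rem = Rem.fail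

end Conc

/-! Petrification: the petrified program `P_β(prog)` as a Petri program. -/

namespace Conc

/-- Places of the petrified program with thread limit `β`. -/
inductive PPlace (T : Type) (β : ℕ) where
  | loc : Rem T → T → Option (Fin β) → PPlace T β
  | inUse : T → Fin β → PPlace T β
  | notInUse : T → Fin β → PPlace T β
  | insuff : T → PPlace T β

/-- Instantiated variables of the petrified program. -/
inductive IVar (T : Type) (β : ℕ) where
  | glob : Var → IVar T β
  | inst : Var → T → Option (Fin β) → IVar T β
  | idv : T → Fin β → IVar T β
deriving DecidableEq

/-- States of the petrified (Petri) program. -/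
abbrev IState (T : Type) (β : ℕ) := IVar T β → Val

/-- De-instantiated view of an instantiated state for thread instance `(θ, k)`. -/
def iev {T : Type} {β : ℕ} (P : Prog T) (σ : IState T β) (θ : T) (k : Option (Fin β)) :
    Var → Val :=
  fun x => if P.isGlobal x then σ (.glob x) else σ (.inst x θ k)

/-- Semantics of the instantiated assignment `[x := e]_{θ,k}`. -/
def assignRel {T : Type} {β : ℕ} [DecidableEq T] (P : Prog T) (x : Var) (e : AExp)
    (θ : T) (k : Option (Fin β)) : IState T β → IState T β → Prop :=
  fun σ σ' =>
    σ' = if P.isGlobal x then Function.update σ (.glob x) (e (iev P σ θ k))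
         else Function.update σ (.inst x θ k) (e (iev P σ θ k))

/-- Semantics of the instantiated statement `[assume e]_{θ,k}`. -/
def assumeRel {T : Type} {β : ℕ} (P : Prog T) (e : BExp) (θ : T) (k : Option (Fin β)) :
    IState T β → IState T β → Prop :=
  fun σ σ' => σ' = σ ∧ e (iev P σ θ k)

/-- Semantics of the fork label `id_{θ'}^{k'} := [e]_{θ,k}`. -/
def forkRel {T : Type} {β : ℕ} [DecidableEq T] (P : Prog T) (e : AExp)
    (θ : T) (k : Option (Fin β)) (θ' : T) (k' : Fin β) : IState T β → IState T β → Prop :=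
  fun σ σ' => σ' = Function.update σ (.idv θ' k') (e (iev P σ θ k))

/-- Semantics of the join label `assume id_{θ'}^{k'} == [e]_{θ,k}`. -/
def joinRel {T : Type} {β : ℕ} (P : Prog T) (e : AExp)
    (θ : T) (k : Option (Fin β)) (θ' : T) (k' : Fin β) : IState T β → IState T β → Prop :=
  fun σ σ' => σ' = σ ∧ σ (.idv θ' k') = e (iev P σ θ k)

/-- The control-flow relation of petrification: `pre ⟶[R] post`, where transitions are
labelled with the semantic relation `R` of their instantiated simple statement. -/
inductive PTrans {T : Type} {β : ℕ} [DecidableEq T] (P : Prog T) :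
    Set (PPlace T β) → (IState T β → IState T β → Prop) → Set (PPlace T β) → Prop where
  | assume_ (e : BExp) (X : Rem T) (θ : T) (k : Option (Fin β)) :
      PTrans P {.loc (Rem.after (.assume_ e) X) θ k} (assumeRel P e θ k) {.loc X θ k}
  | assign (x : Var) (e : AExp) (X : Rem T) (θ : T) (k : Option (Fin β)) :
      PTrans P {.loc (Rem.after (.assign x e) X) θ k} (assignRel P x e θ k) {.loc X θ k}
  | assert₁ (e : BExp) (X : Rem T) (θ : T) (k : Option (Fin β)) :
      PTrans P {.loc (Rem.after (.assert_ e) X) θ k} (assumeRel P e θ k) {.loc X θ k}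
  | assert₂ (e : BExp) (X : Rem T) (θ : T) (k : Option (Fin β)) :
      PTrans P {.loc (Rem.after (.assert_ e) X) θ k}
        (assumeRel P (fun v => ¬ e v) θ k) {.loc Rem.fail θ k}
  | ite₁ (e : BExp) (C₁ C₂ : Cmd T) (X : Rem T) (θ : T) (k : Option (Fin β)) :
      PTrans P {.loc (Rem.after (.ite e C₁ C₂) X) θ k} (assumeRel P e θ k)
        {.loc (Rem.after C₁ X) θ k}
  | ite₂ (e : BExp) (C₁ C₂ : Cmd T) (X : Rem T) (θ : T) (k : Option (Fin β)) :
      PTrans P {.loc (Rem.after (.ite e C₁ C₂) X) θ k} (assumeRel P (fun v => ¬ e v) θ k)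
        {.loc (Rem.after C₂ X) θ k}
  | while₁ (e : BExp) (C : Cmd T) (X : Rem T) (θ : T) (k : Option (Fin β)) :
      PTrans P {.loc (Rem.after (.while_ e C) X) θ k} (assumeRel P e θ k)
        {.loc (Rem.after C (Rem.after (.while_ e C) X)) θ k}
  | while₂ (e : BExp) (C : Cmd T) (X : Rem T) (θ : T) (k : Option (Fin β)) :
      PTrans P {.loc (Rem.after (.while_ e C) X) θ k} (assumeRel P (fun v => ¬ e v) θ k)
        {.loc X θ k}
  | fork (e : AExp) (θ' : T) (X : Rem T) (θ : T) (k : Option (Fin β)) (k' : Fin β) :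
      PTrans P
        ({.loc (Rem.after (.fork e θ') X) θ k, .notInUse θ' k'} ∪
          (PPlace.inUse θ') '' {j | j < k'})
        (forkRel P e θ k θ' k')
        ({.loc X θ k, .loc (.run (P.body θ')) θ' (some k'), .inUse θ' k'} ∪
          (PPlace.inUse θ') '' {j | j < k'})
  | insufficiency (e : AExp) (θ' : T) (X : Rem T) (θ : T) (k : Option (Fin β)) :
      PTrans P
        ({.loc (Rem.after (.fork e θ') X) θ k} ∪ (PPlace.inUse θ') '' Set.univ)
        (fun σ σ' => σ' = σ)
        {.insuff θ'}
  | join (e : AExp) (X : Rem T) (θ : T) (k : Option (Fin β)) (θ' : T) (k' : Fin β) :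
      PTrans P {.loc (Rem.after (.join e) X) θ k, .loc Rem.term θ' (some k'), .inUse θ' k'}
        (joinRel P e θ k θ' k')
        {.loc X θ k, .notInUse θ' k'}

/-- Initial marking of the petrified program. -/
def initMark {T : Type} (P : Prog T) (β : ℕ) : Set (PPlace T β) :=
  {PPlace.loc (.run (P.body P.main)) P.main none} ∪ {p | ∃ θ k, p = PPlace.notInUse θ k}

/-- Reachability of a marking together with a semantically consistent state
(markings of the 1-safe petrified program are identified with sets of places). -/
inductive PReach {T : Type} [DecidableEq T] (P : Prog T) (β : ℕ) :
    Set (PPlace T β) → IState T β → Prop where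
  | init (σ : IState T β) : PReach P β (initMark P β) σ
  | step {m σ pre R post σ'} : PReach P β m σ → PTrans P pre R post → pre ⊆ m →
      R σ σ' → PReach P β ((m \ pre) ∪ post) σ'

/-- The petrified program satisfies the specification `S` (a set of bad places):
no semantically executable firing sequence reaches a marking intersecting `S`. -/
def Satisfies {T : Type} [DecidableEq T] (P : Prog T) (β : ℕ) (S : Set (PPlace T β)) : Prop :=
  ¬ ∃ m σ, PReach P β m σ ∧ (m ∩ S).Nonempty

/-- The safety specification `S_safe`. -/
def Ssafe (T : Type) (β : ℕ) : Set (PPlace T β) :=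
  {p | ∃ θ k, p = PPlace.loc Rem.fail θ k}

/-- The bound specification `S_bound`. -/
def Sbound (T : Type) (β : ℕ) : Set (PPlace T β) :=
  {p | ∃ θ, p = PPlace.insuff θ}

end Conc

/-! Renumbering thread instances along `Fin.castLE` embeds `P_β(prog)` into `P_β'(prog)`.
Every firing of the smaller net is replayed in the larger one, except an insufficiency
transition, which is skipped: its only effect is to mark an `insuff` place, and the places
it consumes may stay marked in the larger net, since extra tokens never disable a transition.
So the places of a reachable marking outside `S_bound`, together with the state, are
reproduced by a reachable marking and state of `P_β'(prog)`, and a marked failure place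
survives the translation. -/

theorem Set.image_diff_union_diff_subset {α γ : Type*} {f : α → γ} (hf : Function.Injective f)
    {m pre post B : Set α} {mb : Set γ} (hm : f '' (m \ B) ⊆ mb) :
    f '' ((m \ pre ∪ post) \ B) ⊆ mb \ f '' pre ∪ f '' post := by
  rintro _ ⟨p, ⟨⟨hpm, hpre⟩ | hpost, hpB⟩, rfl⟩
  · refine Or.inl ⟨hm ⟨p, ⟨hpm, hpB⟩, rfl⟩, ?_⟩
    rintro ⟨q, hq, hqp⟩
    exact hpre (hf hqp ▸ hq)
  · exact Or.inr ⟨p, hpost, rfl⟩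

namespace Conc

variable {T : Type} {β β' : ℕ}

def PPlace.castLE (hle : β ≤ β') : PPlace T β → PPlace T β'
  | .loc X θ k => .loc X θ (k.map (Fin.castLE hle))
  | .inUse θ k => .inUse θ (Fin.castLE hle k)
  | .notInUse θ k => .notInUse θ (Fin.castLE hle k)
  | .insuff θ => .insuff θ

def IVar.castLE (hle : β ≤ β') : IVar T β → IVar T β'
  | .glob x => .glob x
  | .inst x θ k => .inst x θ (k.map (Fin.castLE hle))
  | .idv θ k => .idv θ (Fin.castLE hle k)

theorem PPlace.castLE_injective (hle : β ≤ β') :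
    Function.Injective (PPlace.castLE (T := T) hle) := by
  have hk := Option.map_injective (Fin.castLE_injective hle)
  rintro (_ | _ | _ | _) (_ | _ | _ | _) h <;>
    simp_all [PPlace.castLE, (Fin.castLE_injective hle).eq_iff, hk.eq_iff]

theorem IVar.castLE_injective (hle : β ≤ β') :
    Function.Injective (IVar.castLE (T := T) hle) := by
  have hk := Option.map_injective (Fin.castLE_injective hle)
  rintro (_ | _ | _) (_ | _ | _) h <;>
    simp_all [IVar.castLE, (Fin.castLE_injective hle).eq_iff, hk.eq_iff]

theorem iev_comp_castLE (hle : β ≤ β') (P : Prog T) (σ : IState T β') (θ : T)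
    (k : Option (Fin β)) :
    iev P (σ ∘ IVar.castLE hle) θ k = iev P σ θ (k.map (Fin.castLE hle)) :=
  rfl

theorem image_castLE_inUse_Iio (hle : β ≤ β') (θ : T) (k : Fin β) :
    PPlace.castLE hle '' (PPlace.inUse θ '' {j | j < k})
      = PPlace.inUse θ '' {j | j < Fin.castLE hle k} := by
  change _ = PPlace.inUse θ '' Set.Iio (Fin.castLE hle k)
  rw [Set.image_image, ← Fin.image_castLE_Iio k hle, Set.image_image]
  rfl

theorem image_castLE_initMark_subset (hle : β ≤ β') (P : Prog T) :
    PPlace.castLE hle '' initMark P β ⊆ initMark P β' := by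
  rintro _ ⟨p, hp | ⟨θ, k, rfl⟩, rfl⟩
  · rw [Set.mem_singleton_iff.mp hp]
    exact Or.inl rfl
  · exact Or.inr ⟨θ, Fin.castLE hle k, rfl⟩

theorem exists_assumeRel_castLE (hle : β ≤ β') (P : Prog T) {e : BExp} {θ : T}
    {k : Option (Fin β)} {σ : IState T β'} {τ : IState T β}
    (h : assumeRel P e θ k (σ ∘ IVar.castLE hle) τ) :
    ∃ σ', assumeRel P e θ (k.map (Fin.castLE hle)) σ σ' ∧ σ' ∘ IVar.castLE hle = τ :=
  ⟨σ, ⟨rfl, h.2⟩, h.1.symm⟩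

section Lift

variable [DecidableEq T] (hle : β ≤ β') (P : Prog T)

theorem PTrans.disjoint_Sbound_pre {pre post : Set (PPlace T β)}
    {R : IState T β → IState T β → Prop} (ht : PTrans P pre R post) :
    Disjoint pre (Sbound T β) := by
  rw [Set.disjoint_right]
  rintro _ ⟨θ, rfl⟩
  cases ht <;> simp

theorem exists_update_castLE {σ : IState T β'} {τ : IState T β} (v : IVar T β) (a : Val)
    (h : τ = Function.update (σ ∘ IVar.castLE hle) v a) :
    ∃ σ', σ' = Function.update σ (IVar.castLE hle v) a ∧ σ' ∘ IVar.castLE hle = τ :=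
  ⟨_, rfl, by rw [h, Function.update_comp_eq_of_injective _ (IVar.castLE_injective hle)]⟩

theorem PTrans.castLE_or_stutter {pre post : Set (PPlace T β)}
    {R : IState T β → IState T β → Prop} (ht : PTrans P pre R post) :
    (post ⊆ Sbound T β ∧ ∀ σ τ, R σ τ → τ = σ) ∨
      ∃ R', PTrans P (PPlace.castLE hle '' pre) R' (PPlace.castLE hle '' post) ∧
        ∀ σ τ, R (σ ∘ IVar.castLE hle) τ → ∃ σ', R' σ σ' ∧ σ' ∘ IVar.castLE hle = τ := by
  cases ht with
  | insufficiency e θ' X θ k =>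
    exact Or.inl ⟨by rintro _ rfl; exact ⟨θ', rfl⟩, fun _ _ h => h⟩
  | assign x e X θ k =>
    refine Or.inr ⟨assignRel P x e θ (k.map (Fin.castLE hle)), ?_, fun σ τ h => ?_⟩
    · simp only [Set.image_singleton, PPlace.castLE]
      exact PTrans.assign x e X θ _
    unfold assignRel at h ⊢
    rw [iev_comp_castLE] at h
    split_ifs at h ⊢
    · exact exists_update_castLE hle (.glob x) _ h
    · exact exists_update_castLE hle (.inst x θ k) _ h
  | fork e θ' X θ k k' =>
    refine Or.inr ⟨forkRel P e θ (k.map (Fin.castLE hle)) θ' (Fin.castLE hle k'), ?_,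
      fun σ τ h => exists_update_castLE hle (.idv θ' k') _ h⟩
    simpa only [Set.image_union, Set.image_insert_eq, Set.image_singleton,
      image_castLE_inUse_Iio, PPlace.castLE, Option.map_some] using
      PTrans.fork e θ' X θ (k.map (Fin.castLE hle)) (Fin.castLE hle k')
  | join e X θ k θ' k' =>
    refine Or.inr ⟨joinRel P e θ (k.map (Fin.castLE hle)) θ' (Fin.castLE hle k'), ?_,
      fun σ τ h => ⟨σ, ⟨rfl, h.2⟩, h.1.symm⟩⟩
    simpa only [Set.image_insert_eq, Set.image_singleton, PPlace.castLE, Option.map_some] using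
      PTrans.join e X θ (k.map (Fin.castLE hle)) θ' (Fin.castLE hle k')
  | _ =>
    -- the remaining transitions are `assumeRel` steps between two `loc` places
    refine Or.inr ⟨_, ?_, fun _ _ => exists_assumeRel_castLE hle P⟩
    simp only [Set.image_singleton, PPlace.castLE]
    constructor

theorem PReach.castLE {m : Set (PPlace T β)} {σ : IState T β} (h : PReach P β m σ) :
    ∃ mb σb, PReach P β' mb σb ∧ PPlace.castLE hle '' (m \ Sbound T β) ⊆ mb ∧
      σb ∘ IVar.castLE hle = σ := by
  induction h with
  | init σ =>
    exact ⟨_, _, .init (Function.extend (IVar.castLE hle) σ 0),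
      (Set.image_mono Set.sdiff_subset).trans (image_castLE_initMark_subset hle P),
      Function.extend_comp (IVar.castLE_injective hle) σ 0⟩
  | @step m _ pre _ _ _ _ ht hsub hR ih =>
    obtain ⟨mb, σb, hreach, hm, rfl⟩ := ih
    rcases ht.castLE_or_stutter hle P with ⟨hpost, hstutter⟩ | ⟨R', ht', hlift⟩
    · refine ⟨mb, σb, hreach, (Set.image_mono ?_).trans hm, (hstutter _ _ hR).symm⟩
      rintro p ⟨hp | hp, hpB⟩
      exacts [⟨hp.1, hpB⟩, absurd (hpost hp) hpB]
    · obtain ⟨σb', hR', rfl⟩ := hlift _ _ hR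
      have hpre : pre ⊆ m \ Sbound T β := Set.subset_sdiff.mpr ⟨hsub, ht.disjoint_Sbound_pre P⟩
      exact ⟨_, σb', hreach.step ht' ((Set.image_mono hpre).trans hm) hR',
        Set.image_diff_union_diff_subset (PPlace.castLE_injective hle) hm, rfl⟩

end Lift

end Conc

open Conc in
/-- monotonicity of safety violation in the thread limit — if `P_β(prog)`
violates `S_safe`, then so does `P_β'(prog)` for every `β' ≥ β`. -/
theorem safety_violation_monotone {T : Type} [DecidableEq T] (P : Prog T) (β β' : ℕ)
    (h : ¬ Satisfies P β (Ssafe T β)) (hle : β ≤ β') :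
    ¬ Satisfies P β' (Ssafe T β') := by
  intro hsafe'
  refine h fun ⟨m, σ, hreach, p, hpm, θ, k, hp⟩ => hsafe' ?_
  subst hp
  obtain ⟨mb, σb, hreach', hm, -⟩ := hreach.castLE hle P
  have hfail : PPlace.loc .fail θ k ∈ m \ Sbound T β := ⟨hpm, fun ⟨_, h⟩ => nomatch h⟩
  exact ⟨mb, σb, hreach', _, hm ⟨_, hfail, rfl⟩, θ, _, rfl⟩
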